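/- arXiv:1212.4269 — 3 statements merged into one kernel-verified Lean document; each statement's English description precedes it below -/
import Mathlib

section
/- The density of the Poisson(λ)-Erlang(μ) compound at y > 0 can be written in closed form as f(y) = e^{-λ - y/μ} · sqrt(λ/(μ y)) · I_1(2 sqrt(λ y / μ)), where I_1 is the modified Bessel function of the first kind of order 1. -/
/-!
The two series agree term by term: the `k`-th Poisson-weighted Erlang term is
`e^{-λ - y/μ} (λ/μ)^{k+1} y^k / (k! (k+1)!)`, and the prefactor `√(λ/(μy))` turns the
`k`-th Bessel term `√(λy/μ)^{2k+1} / (k! (k+1)!)` into exactly this, because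
`√(λ/(μy)) · √(λy/μ) = λ/μ`.
-/

open scoped Nat

/-- The modified Bessel function of the first kind of order 1, via its power series. -/
noncomputable def besselI1 (x : ℝ) : ℝ :=
  ∑' k : ℕ, (x / 2) ^ (2 * k + 1) / ((k ! : ℝ) * ((k + 1)! : ℝ))

/-- Poisson PMF with mean `λ`. -/
noncomputable def poissonPMF (l : ℝ) (k : ℕ) : ℝ := Real.exp (-l) * l ^ k / (k ! : ℝ)

/-- Erlang density with shape `k ≥ 1` and scale `μ`, at `y > 0`. -/
noncomputable def erlangPDF (k : ℕ) (μ y : ℝ) : ℝ :=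
  y ^ (k - 1) * Real.exp (-(y / μ)) / (μ ^ k * ((k - 1)! : ℝ))

theorem poissonPMF_succ_mul_erlangPDF_succ (l μ y : ℝ) (k : ℕ) :
    poissonPMF l (k + 1) * erlangPDF (k + 1) μ y
      = Real.exp (-l - y / μ) * ((l / μ) ^ (k + 1) * y ^ k) / ((k ! : ℝ) * ((k + 1)! : ℝ)) := by
  have hexp : Real.exp (-l - y / μ) = Real.exp (-l) * Real.exp (-(y / μ)) := by
    rw [← Real.exp_add, sub_eq_add_neg]
  rw [poissonPMF, erlangPDF, Nat.add_sub_cancel, hexp, div_pow]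
  field_simp

theorem sqrt_mul_sqrt_pow_two_mul_add_one {a b : ℝ} (hb : 0 ≤ b) (k : ℕ) :
    Real.sqrt a * Real.sqrt b ^ (2 * k + 1) = Real.sqrt (a * b) * b ^ k := by
  rw [pow_succ, pow_mul, Real.sq_sqrt hb, Real.sqrt_mul' a hb]
  ring

theorem sqrt_div_mul_sqrt_mul_div_pow {l μ y : ℝ} (hl : 0 ≤ l) (hμ : 0 < μ) (hy : 0 < y)
    (k : ℕ) :
    Real.sqrt (l / (μ * y)) * Real.sqrt (l * y / μ) ^ (2 * k + 1) = (l / μ) ^ (k + 1) * y ^ k := by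
  have hprod : l / (μ * y) * (l * y / μ) = (l / μ) ^ 2 := by
    field_simp
  rw [sqrt_mul_sqrt_pow_two_mul_add_one (by positivity), hprod,
    Real.sqrt_sq (by positivity), mul_div_right_comm, mul_pow]
  ring

theorem besselI1_two_mul (x : ℝ) :
    besselI1 (2 * x) = ∑' k : ℕ, x ^ (2 * k + 1) / ((k ! : ℝ) * ((k + 1)! : ℝ)) := by
  simp only [besselI1, mul_div_cancel_left₀ x two_ne_zero]

/-- Closed form of the Poisson(λ)-Erlang(μ) compound density at `y > 0`:
`f(y) = e^{-λ - y/μ} √(λ/(μy)) I₁(2√(λy/μ))`. -/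
theorem compound_poisson_erlang_density_closed_form (l μ y : ℝ)
    (hl : 0 < l) (hμ : 0 < μ) (hy : 0 < y) :
    (∑' k : ℕ, poissonPMF l (k + 1) * erlangPDF (k + 1) μ y)
      = Real.exp (-l - y / μ) * Real.sqrt (l / (μ * y)) *
          besselI1 (2 * Real.sqrt (l * y / μ)) := by
  rw [besselI1_two_mul, ← tsum_mul_left]
  refine tsum_congr fun k => ?_
  rw [poissonPMF_succ_mul_erlangPDF_succ, ← sqrt_div_mul_sqrt_mul_div_pow hl.le hμ hy k]
  ring
end

section
/- The function g(x) = x · I_1(x) is strictly log-concave on (0, ∞); that is, log(x · I_1(x)) is strictly concave for x > 0. -/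
/-!
With `g(x) = x I₁(x)` one has `g' = x I₀` and `(x I₀)' = I₀ + x I₁` (termwise differentiation,
using `I₀' = I₁`), so strict log-concavity of `g` on `(0, ∞)` is the inequality
`F = g'² - g g'' > 0` there. Now `F(0) = 0` and `F' = x (I₀² - I₁²)`, which is positive for
`x > 0` because `0 < I₁ ≤ I₀ - 1/2`: with `a_k = (x/2)^k / k!` we have `I₀ = ∑ a_k²` and
`I₁ = ∑ a_k a_{k+1}`, and `a_k a_{k+1} ≤ (a_k² + a_{k+1}²) / 2`.
-/

open scoped Nat

theorem strictConcaveOn_log_of_hasDerivAt {s : Set ℝ} (hs : Convex ℝ s) {g g' g'' : ℝ → ℝ}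
    (hg : ∀ x ∈ s, 0 < g x) (hg' : ∀ x ∈ s, HasDerivAt g (g' x) x)
    (hg'' : ∀ x ∈ s, HasDerivAt g' (g'' x) x) (h : ∀ x ∈ s, g x * g'' x < g' x ^ 2) :
    StrictConcaveOn ℝ s (fun x => Real.log (g x)) := by
  have hlog : ∀ x ∈ s, HasDerivAt (fun y => Real.log (g y)) (g' x / g x) x :=
    fun x hx => (hg' x hx).log (hg x hx).ne'
  have hanti : StrictAntiOn (fun x => g' x / g x) (interior s) := by
    refine strictAntiOn_of_hasDerivWithinAt_neg hs.interior
      (f' := fun x => (g'' x * g x - g' x * g' x) / g x ^ 2) (fun x hx => ?_) (fun x hx => ?_)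
      (fun x hx => ?_)
    · have hxs := interior_subset hx
      exact ((hg'' x hxs).continuousAt.div (hg' x hxs).continuousAt
        (hg x hxs).ne').continuousWithinAt
    · have hxs := interior_subset (interior_subset hx)
      exact ((hg'' x hxs).div (hg' x hxs) (hg x hxs).ne').hasDerivWithinAt
    · have hxs := interior_subset (interior_subset hx)
      exact div_neg_of_neg_of_pos (by nlinarith [h x hxs]) (pow_pos (hg x hxs) 2)
  have hderiv : Set.EqOn (fun x => g' x / g x) (deriv fun x => Real.log (g x)) (interior s) :=
    fun x hx => ((hlog x (interior_subset hx)).deriv).symm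
  exact (hanti.congr hderiv).strictConcaveOn_of_deriv hs
    fun x hx => (hlog x hx).continuousAt.continuousWithinAt

theorem hasDerivAt_tsum_mul_pow {c : ℕ → ℝ} {e : ℕ → ℕ}
    (hc : ∀ R, Summable fun k => |c k| * R ^ e k) (x : ℝ) :
    HasDerivAt (fun y => ∑' k, c k * y ^ e k) (∑' k, c k * (e k * x ^ (e k - 1))) x := by
  set r := |x| + 1
  have hr : 1 ≤ r := le_add_of_nonneg_left (abs_nonneg x)
  have hx : x ∈ Metric.ball (0 : ℝ) r := by simp [r]
  refine hasDerivAt_tsum_of_isPreconnected (hc (2 * r)) Metric.isOpen_ball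
    (convex_ball 0 r).isPreconnected (fun k y _ => (hasDerivAt_pow (e k) y).const_mul (c k))
    (fun k y hy => ?_) hx ((hc |x|).of_norm_bounded fun k => ?_) hx
  · have hy : |y| ≤ r := by simpa using (Metric.mem_ball.1 hy).le
    have he : (e k : ℝ) ≤ 2 ^ e k := by exact_mod_cast Nat.lt_two_pow_self.le
    have hpow : |y| ^ (e k - 1) ≤ r ^ e k :=
      (pow_le_pow_left₀ (abs_nonneg y) hy _).trans (pow_le_pow_right₀ hr (Nat.sub_le _ _))
    simp only [norm_mul, norm_pow, Real.norm_eq_abs, Nat.abs_cast, mul_pow]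
    gcongr
  · rw [norm_mul, norm_pow, Real.norm_eq_abs, Real.norm_eq_abs]

theorem abs_inv_factorial_mul_le (k n : ℕ) : |((k ! : ℝ) * n !)⁻¹| ≤ (k ! : ℝ)⁻¹ := by
  rw [abs_of_pos (by positivity)]
  exact inv_anti₀ (by positivity)
    (le_mul_of_one_le_right (by positivity) (by exact_mod_cast n.factorial_pos))

theorem summable_abs_mul_pow_two_mul_add {c : ℕ → ℝ} (hc : ∀ k, |c k| ≤ (k ! : ℝ)⁻¹) (m : ℕ)
    (R : ℝ) : Summable fun k => |c k| * R ^ (2 * k + m) := by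
  refine ((Real.summable_pow_div_factorial (R ^ 2)).mul_left (|R| ^ m)).of_norm_bounded fun k => ?_
  calc ‖|c k| * R ^ (2 * k + m)‖ = |c k| * ((R ^ 2) ^ k * |R| ^ m) := by
        simp only [norm_mul, norm_pow, Real.norm_eq_abs, abs_abs, pow_add, pow_mul, sq_abs]
    _ ≤ (k ! : ℝ)⁻¹ * ((R ^ 2) ^ k * |R| ^ m) := by gcongr; exact hc k
    _ = |R| ^ m * ((R ^ 2) ^ k / k !) := by ring

noncomputable def besselI0 (x : ℝ) : ℝ :=
  ∑' k : ℕ, (x / 2) ^ (2 * k) / ((k ! : ℝ) * (k ! : ℝ))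

theorem hasDerivAt_besselI0 (x : ℝ) : HasDerivAt besselI0 (besselI1 x) x := by
  have h := (hasDerivAt_tsum_mul_pow (c := fun k => ((k ! : ℝ) * k !)⁻¹) (e := fun k => 2 * k)
    (summable_abs_mul_pow_two_mul_add (fun k => abs_inv_factorial_mul_le k k) 0) (x / 2)).comp x
    ((hasDerivAt_id x).div_const 2)
  refine (h.congr_deriv ?_).congr_of_eventuallyEq (.of_forall fun y => ?_)
  · -- the `k = 0` term of the derivative series vanishes, so it can be reindexed from `k + 1`
    rw [besselI1, ← Nat.succ_injective.tsum_eq fun k hk =>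
      Nat.exists_eq_add_one_of_ne_zero (by rintro rfl; simp at hk) |>.imp fun _ => Eq.symm,
      ← tsum_mul_right]
    refine tsum_congr fun k => ?_
    push_cast [Nat.factorial_succ, Nat.mul_succ]
    field_simp
  · exact tsum_congr fun k => div_eq_inv_mul _ _

theorem hasDerivAt_mul_besselI1 (x : ℝ) :
    HasDerivAt (fun y => y * besselI1 y) (x * besselI0 x) x := by
  have h := ((hasDerivAt_tsum_mul_pow (c := fun k => ((k ! : ℝ) * (k + 1)!)⁻¹)
    (e := fun k => 2 * k + 2)
    (summable_abs_mul_pow_two_mul_add (fun k => abs_inv_factorial_mul_le k (k + 1)) 2)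
    (x / 2)).comp x ((hasDerivAt_id x).div_const 2)).const_mul 2
  refine (h.congr_deriv ?_).congr_of_eventuallyEq (.of_forall fun y => ?_)
  · rw [besselI0, ← tsum_mul_left, ← tsum_mul_right, ← tsum_mul_left]
    refine tsum_congr fun k => ?_
    push_cast [Nat.factorial_succ]
    field_simp
    ring
  · simp only [Function.comp_apply, id, besselI1, ← tsum_mul_left]
    refine tsum_congr fun k => ?_
    ring

theorem hasDerivAt_mul_besselI0 (x : ℝ) :
    HasDerivAt (fun y => y * besselI0 y) (besselI0 x + x * besselI1 x) x := by
  simpa using (hasDerivAt_id' x).fun_mul (hasDerivAt_besselI0 x)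

section ShiftedProducts

variable {a : ℕ → ℝ}

theorem summable_mul_succ_of_summable_sq (ha : Summable fun k => a k ^ 2) :
    Summable fun k => a k * a (k + 1) := by
  refine ((ha.add ((summable_nat_add_iff 1).2 ha)).div_const 2).of_norm_bounded fun k => ?_
  rw [Real.norm_eq_abs, abs_mul]
  linarith [two_mul_le_add_sq |a k| |a (k + 1)|, sq_abs (a k), sq_abs (a (k + 1))]

theorem tsum_mul_succ_le_tsum_sq_sub (ha : Summable fun k => a k ^ 2) :
    ∑' k, a k * a (k + 1) ≤ ∑' k, a k ^ 2 - a 0 ^ 2 / 2 := by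
  have ha' : Summable fun k => a (k + 1) ^ 2 := (summable_nat_add_iff 1).2 ha
  calc ∑' k, a k * a (k + 1) ≤ ∑' k, (a k ^ 2 + a (k + 1) ^ 2) / 2 :=
        (summable_mul_succ_of_summable_sq ha).tsum_le_tsum
          (fun k => by linarith [two_mul_le_add_sq (a k) (a (k + 1))]) ((ha.add ha').div_const 2)
    _ = ∑' k, a k ^ 2 - a 0 ^ 2 / 2 := by
        rw [tsum_div_const, ha.tsum_add ha', ha.tsum_eq_zero_add]
        ring

end ShiftedProducts

theorem summable_sq_pow_div_factorial (y : ℝ) : Summable fun k => (y ^ k / k !) ^ 2 := by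
  refine (Real.summable_pow_div_factorial (y ^ 2)).of_nonneg_of_le (fun k => sq_nonneg _)
    fun k => ?_
  rw [div_pow, ← pow_mul, mul_comm k 2, pow_mul]
  exact div_le_div_of_nonneg_left (by positivity) (by positivity)
    (le_self_pow₀ (by exact_mod_cast k.factorial_pos) two_ne_zero)

theorem besselI0_eq_tsum_sq (x : ℝ) : besselI0 x = ∑' k, ((x / 2) ^ k / k !) ^ 2 :=
  tsum_congr fun k => by ring

theorem besselI1_eq_tsum_mul_succ (x : ℝ) :
    besselI1 x = ∑' k, (x / 2) ^ k / k ! * ((x / 2) ^ (k + 1) / (k + 1)!) :=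
  tsum_congr fun k => by ring

theorem besselI1_add_half_le_besselI0 (x : ℝ) : besselI1 x + 1 / 2 ≤ besselI0 x := by
  have := tsum_mul_succ_le_tsum_sq_sub (summable_sq_pow_div_factorial (x / 2))
  rw [besselI0_eq_tsum_sq, besselI1_eq_tsum_mul_succ]
  simp only [pow_zero, Nat.factorial_zero, Nat.cast_one, div_one, one_pow] at this
  linarith

theorem besselI1_pos {x : ℝ} (hx : 0 < x) : 0 < besselI1 x := by
  rw [besselI1_eq_tsum_mul_succ]
  exact (summable_mul_succ_of_summable_sq (summable_sq_pow_div_factorial (x / 2))).tsum_pos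
    (fun k => by positivity) 0 (by positivity)

theorem mul_besselI1_mul_lt_sq {x : ℝ} (hx : 0 < x) :
    x * besselI1 x * (besselI0 x + x * besselI1 x) < (x * besselI0 x) ^ 2 := by
  let F y := (y * besselI0 y) ^ 2 - y * besselI1 y * (besselI0 y + y * besselI1 y)
  have hF : ∀ y, HasDerivAt F (y * (besselI0 y ^ 2 - besselI1 y ^ 2)) y := fun y =>
    (((hasDerivAt_mul_besselI0 y).fun_pow 2).fun_sub ((hasDerivAt_mul_besselI1 y).fun_mul
      ((hasDerivAt_besselI0 y).fun_add (hasDerivAt_mul_besselI1 y)))).congr_deriv (by ring)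
  have hF_mono : StrictMonoOn F (Set.Ici 0) := by
    refine strictMonoOn_of_hasDerivWithinAt_pos (convex_Ici 0)
      (fun y _ => (hF y).continuousAt.continuousWithinAt) (fun y _ => (hF y).hasDerivWithinAt)
      fun y hy => ?_
    rw [interior_Ici] at hy
    have := besselI1_add_half_le_besselI0 y
    have := besselI1_pos hy
    exact mul_pos hy (by nlinarith)
  have := hF_mono Set.self_mem_Ici hx.le hx
  simp only [F] at this
  linarith

/-- `x ↦ x · I₁(x)` is strictly log-concave on `(0, ∞)`. -/
theorem strictLogConcave_mul_besselI1 :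
    StrictConcaveOn ℝ (Set.Ioi (0 : ℝ)) (fun x => Real.log (x * besselI1 x)) :=
  strictConcaveOn_log_of_hasDerivAt (convex_Ioi 0) (fun _ hx => mul_pos hx (besselI1_pos hx))
    (fun x _ => hasDerivAt_mul_besselI1 x) (fun x _ => hasDerivAt_mul_besselI0 x)
    fun _ hx => mul_besselI1_mul_lt_sq hx
end

section
/- Let h(u) = −log( Σ_{k=1}^∞ u^k y^k / ((k-1)! k! μ^k) ) for fixed y, μ > 0. Then h is strictly convex and strictly decreasing on (0, ∞). -/
/-!
Put `t = u y / μ`. The series is `ti₁ t = Σ t^(k+1) / (k! (k+1)!)`, whose derivative is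
`i₀ t = Σ tᵏ / (k!)²` and whose second derivative is `i₁ t = Σ tᵏ / (k! (k+1)!)`, so `ti₁ = t i₁`.
A positive `f` has `-log f` strictly convex where `f f'' < f'²`; here this reads `t i₁² < i₀²`,
which follows from Cauchy–Schwarz: `(t i₁)² = (Σ rₖ)² ≤ (Σ aₖ)(Σ bₖ) = i₀ · t (i₀ - 1)` for
`aₖ = tᵏ / (k!)²`, `bₖ = t^(k+2) / ((k+1)!)²`, `rₖ² = aₖ bₖ`. Monotonicity comes from `i₀ > 0`.
-/

open scoped Nat
open Real Set

theorem tsum_sq_le_tsum_mul_tsum_of_sq_le_mul {r f g : ℕ → ℝ} (hr : Summable r)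
    (hf : Summable f) (hg : Summable g) (hf0 : ∀ i, 0 ≤ f i) (hg0 : ∀ i, 0 ≤ g i)
    (h : ∀ i, r i ^ 2 ≤ f i * g i) : (∑' i, r i) ^ 2 ≤ (∑' i, f i) * ∑' i, g i :=
  le_of_tendsto_of_tendsto' (hr.hasSum.tendsto_sum_nat.pow 2)
    (hf.hasSum.tendsto_sum_nat.mul hg.hasSum.tendsto_sum_nat) fun _ =>
      Finset.sum_sq_le_sum_mul_sum_of_sq_le_mul _ (fun i _ => hf0 i) (fun i _ => hg0 i)
        fun i _ => h i

theorem hasDerivAt_tsum_pow_succ_div {d e : ℕ → ℝ} (hde : ∀ k, (k + 1) * e k = d k)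
    (he : ∀ r : ℝ, Summable fun k => r ^ k / e k) (x : ℝ) :
    HasDerivAt (fun x => ∑' k, x ^ (k + 1) / d k) (∑' k, x ^ k / e k) x := by
  have hx : x ∈ Metric.ball (0 : ℝ) (|x| + 1) := by simp
  refine hasDerivAt_tsum_of_isPreconnected (he (|x| + 1)).abs Metric.isOpen_ball
    (convex_ball (0 : ℝ) _).isPreconnected (g := fun k y => y ^ (k + 1) / d k)
    (g' := fun k y => y ^ k / e k) (fun k y _ => ?_) (fun k y hy => ?_)
    (Metric.mem_ball_self (by positivity)) ?_ hx
  · refine ((hasDerivAt_pow (k + 1) y).div_const (d k)).congr_deriv ?_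
    rw [← hde, Nat.add_sub_cancel, Nat.cast_succ, mul_div_mul_left _ _ (by positivity)]
  · rw [mem_ball_zero_iff, norm_eq_abs] at hy
    rw [norm_eq_abs, abs_div, abs_div, abs_pow, abs_pow, abs_of_pos (by positivity : 0 < |x| + 1)]
    gcongr
  · simp only [zero_pow (Nat.succ_ne_zero _), zero_div, summable_zero]

theorem summable_pow_div_factorial_mul_factorial (m : ℕ → ℕ) (r : ℝ) :
    Summable fun k => r ^ k / (k ! * (m k)! : ℝ) := by
  refine (Real.summable_pow_div_factorial |r|).of_norm_bounded fun k => ?_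
  have hk : (0 : ℝ) < k ! := by positivity
  rw [norm_div, norm_pow, norm_eq_abs, norm_of_nonneg (by positivity)]
  exact div_le_div_of_nonneg_left (by positivity) hk
    (le_mul_of_one_le_right hk.le (by exact_mod_cast (m k).factorial_pos))

theorem strictConvexOn_neg_log_of_mul_lt_sq {s : Set ℝ} (hs : Convex ℝ s) (hso : IsOpen s)
    {f f' f'' : ℝ → ℝ} (hf : ∀ x ∈ s, HasDerivAt f (f' x) x)
    (hf' : ∀ x ∈ s, HasDerivAt f' (f'' x) x) (hpos : ∀ x ∈ s, 0 < f x)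
    (hlc : ∀ x ∈ s, f x * f'' x < f' x ^ 2) : StrictConvexOn ℝ s fun x => -log (f x) := by
  have hderiv : ∀ x ∈ s, HasDerivAt (fun x => -log (f x)) (-(f' x / f x)) x :=
    fun x hx => ((hf x hx).log (hpos x hx).ne').neg
  have hmono : StrictMonoOn (fun x => -(f' x / f x)) s := by
    have hratio : ∀ x ∈ s, HasDerivAt (fun x => -(f' x / f x))
        ((f' x ^ 2 - f x * f'' x) / f x ^ 2) x := fun x hx => by
      refine (((hf' x hx).div (hf x hx) (hpos x hx).ne').neg).congr_deriv ?_
      ring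
    refine strictMonoOn_of_deriv_pos hs
      (fun x hx => (hratio x hx).continuousAt.continuousWithinAt) fun x hx => ?_
    rw [hso.interior_eq] at hx
    rw [(hratio x hx).deriv]
    exact div_pos (sub_pos.mpr (hlc x hx)) (pow_pos (hpos x hx) 2)
  refine StrictMonoOn.strictConvexOn_of_deriv hs
    (fun x hx => (hderiv x hx).continuousAt.continuousWithinAt) ?_
  rw [hso.interior_eq]
  exact hmono.congr fun x hx => (hderiv x hx).deriv.symm

theorem strictAntiOn_neg_log_of_deriv_pos {s : Set ℝ} (hs : Convex ℝ s) (hso : IsOpen s)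
    {f f' : ℝ → ℝ} (hf : ∀ x ∈ s, HasDerivAt f (f' x) x) (hf'pos : ∀ x ∈ s, 0 < f' x)
    (hpos : ∀ x ∈ s, 0 < f x) : StrictAntiOn (fun x => -log (f x)) s := by
  have hmono : StrictMonoOn f s := strictMonoOn_of_deriv_pos hs
    (fun x hx => (hf x hx).continuousAt.continuousWithinAt) fun x hx => by
      rw [hso.interior_eq] at hx
      rw [(hf x hx).deriv]
      exact hf'pos x hx
  exact fun a ha b hb hab => neg_lt_neg (log_lt_log (hpos a ha) (hmono ha hb hab))

namespace BesselSeries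

/-- For `t ≥ 0`: `i₀ t = I₀(2√t)`, `i₁ t = I₁(2√t) / √t` and `ti₁ t = √t I₁(2√t)`, where `Iₙ` are the
modified Bessel functions. -/
noncomputable def i₀ (t : ℝ) : ℝ := ∑' k : ℕ, t ^ k / (k ! * k ! : ℝ)

noncomputable def i₁ (t : ℝ) : ℝ := ∑' k : ℕ, t ^ k / (k ! * (k + 1)! : ℝ)

noncomputable def ti₁ (t : ℝ) : ℝ := ∑' k : ℕ, t ^ (k + 1) / (k ! * (k + 1)! : ℝ)

theorem summable_i₀ (t : ℝ) : Summable fun k : ℕ => t ^ k / (k ! * k ! : ℝ) :=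
  summable_pow_div_factorial_mul_factorial id t

theorem summable_i₁ (t : ℝ) : Summable fun k : ℕ => t ^ k / (k ! * (k + 1)! : ℝ) :=
  summable_pow_div_factorial_mul_factorial (· + 1) t

theorem i₀_eq_one_add (t : ℝ) :
    i₀ t = 1 + ∑' k : ℕ, t ^ (k + 1) / ((k + 1)! * (k + 1)! : ℝ) := by
  rw [i₀, (summable_i₀ t).tsum_eq_zero_add]
  simp

theorem ti₁_eq_mul (t : ℝ) : ti₁ t = t * i₁ t := by
  rw [ti₁, i₁, ← tsum_mul_left]
  exact tsum_congr fun k => by rw [pow_succ]; ring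

theorem hasDerivAt_ti₁ (t : ℝ) : HasDerivAt ti₁ (i₀ t) t :=
  hasDerivAt_tsum_pow_succ_div (fun k => by push_cast [Nat.factorial_succ]; ring) summable_i₀ t

theorem hasDerivAt_i₀ (t : ℝ) : HasDerivAt i₀ (i₁ t) t := by
  rw [show i₀ = _ from funext i₀_eq_one_add]
  exact (hasDerivAt_tsum_pow_succ_div (fun k => by push_cast [Nat.factorial_succ]; ring)
    summable_i₁ t).const_add 1

theorem i₀_pos {t : ℝ} (ht : 0 ≤ t) : 0 < i₀ t :=
  (summable_i₀ t).tsum_pos (fun k => by positivity) 0 (by simp)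

theorem i₁_pos {t : ℝ} (ht : 0 ≤ t) : 0 < i₁ t :=
  (summable_i₁ t).tsum_pos (fun k => by positivity) 0 (by simp)

theorem ti₁_pos {t : ℝ} (ht : 0 < t) : 0 < ti₁ t := by
  rw [ti₁_eq_mul]
  exact mul_pos ht (i₁_pos ht.le)

theorem ti₁_mul_i₁_lt_i₀_sq {t : ℝ} (ht : 0 < t) : ti₁ t * i₁ t < i₀ t ^ 2 := by
  have hsummable_ti₁ : Summable fun k : ℕ => t ^ (k + 1) / (k ! * (k + 1)! : ℝ) :=
    ((summable_i₁ t).mul_left t).congr fun k => by ring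
  have hsummable_tail : Summable fun k : ℕ => t ^ (k + 2) / ((k + 1)! * (k + 1)! : ℝ) :=
    (((summable_nat_add_iff 1).mpr (summable_i₀ t)).mul_left t).congr fun k => by ring
  have htail : ∑' k : ℕ, t ^ (k + 2) / ((k + 1)! * (k + 1)! : ℝ) = t * (i₀ t - 1) := by
    rw [i₀_eq_one_add, add_sub_cancel_left, ← tsum_mul_left]
    exact tsum_congr fun k => by ring
  have hcs : ti₁ t ^ 2 ≤ i₀ t * (t * (i₀ t - 1)) := by
    rw [← htail]
    exact tsum_sq_le_tsum_mul_tsum_of_sq_le_mul hsummable_ti₁ (summable_i₀ t) hsummable_tail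
      (fun k => by positivity) (fun k => by positivity) fun k => le_of_eq (by ring)
  refine lt_of_mul_lt_mul_left ?_ ht.le
  calc t * (ti₁ t * i₁ t) = ti₁ t ^ 2 := by rw [ti₁_eq_mul]; ring
    _ ≤ i₀ t * (t * (i₀ t - 1)) := hcs
    _ < t * i₀ t ^ 2 := by nlinarith [mul_pos ht (i₀_pos ht.le)]

theorem ti₁_div_mul (y μ u : ℝ) : ti₁ (y / μ * u) =
    ∑' k : ℕ, u ^ (k + 1) * y ^ (k + 1) / ((k ! : ℝ) * ((k + 1)! : ℝ) * μ ^ (k + 1)) :=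
  tsum_congr fun k => by ring

end BesselSeries

open BesselSeries in
/-- For fixed `y, μ > 0`, the function
`h(u) = -log(Σ_{k=1}^∞ uᵏ yᵏ / ((k-1)! k! μᵏ))` is strictly convex
and strictly decreasing on `(0, ∞)`. -/
theorem neg_log_series_strictConvex_strictAnti (y μ : ℝ) (hy : 0 < y) (hμ : 0 < μ) :
    StrictConvexOn ℝ (Set.Ioi (0 : ℝ))
      (fun u => -Real.log (∑' k : ℕ,
        u ^ (k + 1) * y ^ (k + 1) / ((k ! : ℝ) * ((k + 1)! : ℝ) * μ ^ (k + 1)))) ∧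
    StrictAntiOn
      (fun u => -Real.log (∑' k : ℕ,
        u ^ (k + 1) * y ^ (k + 1) / ((k ! : ℝ) * ((k + 1)! : ℝ) * μ ^ (k + 1))))
      (Set.Ioi (0 : ℝ)) := by
  simp only [← ti₁_div_mul]
  set c := y / μ
  have hc : 0 < c := div_pos hy hμ
  have hf (u : ℝ) : HasDerivAt (fun u => ti₁ (c * u)) (i₀ (c * u) * c) u :=
    (hasDerivAt_ti₁ _).comp u (hasDerivAt_const_mul c)
  have hf' (u : ℝ) : HasDerivAt (fun u => i₀ (c * u) * c) (i₁ (c * u) * c * c) u :=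
    ((hasDerivAt_i₀ _).comp u (hasDerivAt_const_mul c)).mul_const c
  have hpos (u : ℝ) (hu : u ∈ Ioi 0) : 0 < ti₁ (c * u) := ti₁_pos (mul_pos hc hu)
  refine ⟨strictConvexOn_neg_log_of_mul_lt_sq (convex_Ioi 0) isOpen_Ioi (fun u _ => hf u)
    (fun u _ => hf' u) hpos fun u hu => ?_, strictAntiOn_neg_log_of_deriv_pos (convex_Ioi 0)
    isOpen_Ioi (fun u _ => hf u) (fun u hu => mul_pos (i₀_pos (mul_pos hc hu).le) hc) hpos⟩
  linear_combination c ^ 2 * ti₁_mul_i₁_lt_i₀_sq (mul_pos hc hu)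
end
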